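/- Let z_1,…,z_N be independent random points, each uniformly distributed on {0,1}^n. Then the expected quadratic discrepancy of the random N-tuple Z = (z_1,…,z_N) equals E[D^{L2}(Z)] = (n/(N·2^{n+1}))·C(2n,n). -/

import Mathlib

/-!
For fixed `t` and `x`, the number of points `z_j` in the ball `B(x,t)` is a sum of `N` independent
Bernoulli variables of mean `p = V_t / 2^n`, where `V_t = |B(x,t)|`, so the corresponding summand
of the discrepancy has expectation `p (1 - p) / N`. Summing over `x` and `t` leaves
`(N 2^n)⁻¹ Σ_t V_t (2^n - V_t)`. Expanding `V_t` and `2^n - V_t` into binomial coefficients,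
`Σ_t V_t (2^n - V_t) = Σ_{s,r} C(n,s) C(n,r) (r - s)⁺`, since `(r - s)⁺` counts the `t` with
`s ≤ t < r`. Reflecting `r ↦ n - r` and Vandermonde's identity turn this into
`Σ_k C(2n,k) (n - k)⁺`, and `2 Σ_{k<n} (n - k) C(2n,k) = n C(2n,n)` telescopes.
-/

/-- The quadratic discrepancy of an `N`-tuple of points of `{0,1}^n`. -/
noncomputable def discTuple (n N : ℕ) (z : Fin N → (Fin n → Bool)) : ℝ :=
  ∑ t ∈ Finset.range (n + 1), ∑ x : Fin n → Bool,
    ((N : ℝ)⁻¹ * ∑ j : Fin N, (if hammingDist x (z j) ≤ t then (1 : ℝ) else 0)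
      - ((2 : ℝ) ^ n)⁻¹ *
          ((Finset.univ.filter (fun u : Fin n → Bool => hammingDist x u ≤ t)).card : ℝ)) ^ 2

open Finset
open scoped BigOperators

namespace Nat

theorem sum_range_sub_two_mul_mul_choose (N m : ℕ) :
    ∑ k ∈ range m, ((N : ℤ) - 2 * k) * N.choose k = m * N.choose m := by
  induction m with
  | zero => simp
  | succ m ih =>
    rw [sum_range_succ, ih]
    rcases le_or_gt m N with hm | hm
    · have h := choose_succ_right_eq N m
      zify [hm] at h
      push_cast
      linear_combination -h
    · simp [choose_eq_zero_of_lt hm, choose_eq_zero_of_lt (hm.trans (lt_add_one m))]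

theorem two_mul_sum_range_choose_mul_sub (n : ℕ) :
    2 * ∑ k ∈ range (2 * n + 1), (2 * n).choose k * (n - k) = n * (2 * n).choose n := by
  rw [← sum_subset (range_subset_range.2 (by omega : n ≤ 2 * n + 1)) fun k _ hk => by
    rw [Nat.sub_eq_zero_of_le (by simpa using hk), mul_zero]]
  zify
  rw [mul_sum, ← sum_range_sub_two_mul_mul_choose]
  refine sum_congr rfl fun k hk => ?_
  rw [Nat.cast_sub (mem_range.1 hk).le]
  push_cast
  ring

theorem sum_range_sum_range_choose_mul_choose_mul (m n : ℕ) (g : ℕ → ℕ) :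
    ∑ i ∈ range (m + 1), ∑ j ∈ range (n + 1), m.choose i * n.choose j * g (i + j)
      = ∑ k ∈ range (m + n + 1), (m + n).choose k * g k := by
  rw [← sum_product', ← sum_fiberwise_of_maps_to (g := fun p : ℕ × ℕ => p.1 + p.2)
    (t := range (m + n + 1)) fun p hp => by simp at hp ⊢; omega]
  refine sum_congr rfl fun k _ => ?_
  rw [add_choose_eq, sum_mul]
  refine (sum_congr rfl fun p hp => by rw [(mem_filter.1 hp).2]).trans
    (sum_subset (fun p hp => by simp at hp ⊢; omega) fun p hp hp' => ?_)
  simp only [HasAntidiagonal.mem_antidiagonal, mem_filter, mem_product, mem_range,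
    Order.lt_add_one_iff, not_and, and_imp] at hp hp'
  obtain h | h : m < p.1 ∨ n < p.2 := by
    by_contra! h
    exact hp' h.1 h.2 hp
  all_goals simp [choose_eq_zero_of_lt h]

theorem sum_range_sum_ite_le_mul_sum_ite_lt (a : ℕ → ℕ) (m : ℕ) :
    ∑ t ∈ range m, (∑ s ∈ range m, if s ≤ t then a s else 0) *
        (∑ r ∈ range m, if t < r then a r else 0)
      = ∑ s ∈ range m, ∑ r ∈ range m, a s * a r * (r - s) := by
  simp_rw [sum_mul_sum, ite_zero_mul_ite_zero]
  rw [sum_comm]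
  refine sum_congr rfl fun s _ => ?_
  rw [sum_comm]
  refine sum_congr rfl fun r hr => ?_
  rw [sum_ite, sum_const_zero, add_zero, sum_const, smul_eq_mul, mul_comm]
  have hIco : {t ∈ range m | s ≤ t ∧ t < r} = Ico s r := by
    ext t
    simp only [mem_filter, mem_range, mem_Ico] at hr ⊢
    omega
  rw [hIco, card_Ico]

theorem two_mul_sum_range_sum_choose_le_mul_sum_choose_lt (n : ℕ) :
    2 * ∑ t ∈ range (n + 1), (∑ s ∈ range (n + 1), if s ≤ t then n.choose s else 0) *
        (∑ r ∈ range (n + 1), if t < r then n.choose r else 0) = n * (2 * n).choose n := by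
  have reflect (s : ℕ) : ∑ r ∈ range (n + 1), n.choose s * n.choose r * (r - s)
      = ∑ r ∈ range (n + 1), n.choose s * n.choose r * (n - (s + r)) := by
    rw [← sum_range_reflect]
    refine sum_congr rfl fun r hr => ?_
    rw [add_tsub_cancel_right, choose_symm (by simpa [Nat.lt_succ_iff] using hr), Nat.sub_sub,
      add_comm r]
  rw [sum_range_sum_ite_le_mul_sum_ite_lt, sum_congr rfl fun s _ => reflect s,
    sum_range_sum_range_choose_mul_choose_mul n n (n - ·), ← two_mul,
    two_mul_sum_range_choose_mul_sub]

end Nat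

section HammingCube

variable {ι : Type*} [Fintype ι] [DecidableEq ι]

theorem sum_hammingDist_eq_sum_choose_smul {M : Type*} [AddCommMonoid M] (x : ι → Bool)
    (g : ℕ → M) :
    ∑ u, g (hammingDist x u)
      = ∑ m ∈ range (Fintype.card ι + 1), (Fintype.card ι).choose m • g m := by
  rw [← card_univ, ← sum_powerset_apply_card, powerset_univ]
  refine sum_nbij' (fun u => ({i | x i ≠ u i} : Finset ι)) (fun A i => if i ∈ A then !x i else x i)
    (by simp) (by simp) (fun u _ => ?_) (fun A _ => ?_) (fun u _ => rfl)
  · funext i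
    by_cases h : x i = u i <;> simp [h, Bool.eq_not]
  · ext i
    by_cases h : i ∈ A <;> simp [h]

theorem card_filter_hammingDist (x : ι → Bool) (P : ℕ → Prop) [DecidablePred P] :
    #{u | P (hammingDist x u)}
      = ∑ m ∈ range (Fintype.card ι + 1), if P m then (Fintype.card ι).choose m else 0 := by
  rw [card_filter, sum_hammingDist_eq_sum_choose_smul x fun m => if P m then 1 else 0]
  simp

theorem two_mul_sum_card_hammingDist_le_mul_card_lt (x : ι → Bool) :
    2 * ∑ t ∈ range (Fintype.card ι + 1), #{u | hammingDist x u ≤ t} * #{u | t < hammingDist x u}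
      = Fintype.card ι * (2 * Fintype.card ι).choose (Fintype.card ι) := by
  rw [← Nat.two_mul_sum_range_sum_choose_le_mul_sum_choose_lt]
  refine congrArg (2 * ·) (sum_congr rfl fun t _ => ?_)
  rw [card_filter_hammingDist x (· ≤ t), card_filter_hammingDist x (t < ·)]

end HammingCube

section Variance

variable {K X : Type*} [Field K] [CharZero K] [Fintype X]

theorem expect_pi_fin_succ {M : Type*} [AddCommMonoid M] [Module ℚ≥0 M] {N : ℕ}
    (F : (Fin (N + 1) → X) → M) : 𝔼 z, F z = 𝔼 a, 𝔼 w : Fin N → X, F (Fin.cons a w) := by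
  rw [← expect_product', univ_product_univ]
  exact (Fintype.expect_equiv (Fin.consEquiv fun _ => X) _ _ fun _ => rfl).symm

variable [Nonempty X]

theorem expect_expect_add_sq {α β : Type*} [Fintype α] [Fintype β] [Nonempty α] [Nonempty β]
    (F : α → K) (G : β → K) :
    𝔼 a, 𝔼 b, (F a + G b) ^ 2 = 𝔼 a, F a ^ 2 + 2 * (𝔼 a, F a) * (𝔼 b, G b) + 𝔼 b, G b ^ 2 := by
  simp only [add_sq, expect_add_distrib, Fintype.expect_const, ← mul_expect, ← expect_mul]

theorem expect_sq_sum_eq_mul_expect_sq (h : X → K) (hh : 𝔼 u, h u = 0) (N : ℕ) :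
    𝔼 z : Fin N → X, (∑ j, h (z j)) ^ 2 = N * 𝔼 u, h u ^ 2 := by
  induction N with
  | zero => simp
  | succ N ih =>
    simp only [expect_pi_fin_succ, Fin.sum_univ_succ, Fin.cons_zero, Fin.cons_succ,
      expect_expect_add_sq, hh, ih]
    push_cast
    ring

theorem expect_sq_expect_sub_expect (f : X → K) {N : ℕ} (hN : N ≠ 0) :
    𝔼 z : Fin N → X, (𝔼 j, f (z j) - 𝔼 u, f u) ^ 2 = (𝔼 u, (f u - 𝔼 v, f v) ^ 2) / N := by
  set μ := 𝔼 u, f u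
  have hcentred : 𝔼 u, (f u - μ) = 0 := by
    rw [expect_sub_distrib, Fintype.expect_const, sub_self]
  have hmean (z : Fin N → X) : 𝔼 j, f (z j) - μ = (∑ j, (f (z j) - μ)) / N := by
    rw [Fintype.expect_eq_sum_div_card, sum_sub_distrib]
    simp only [Fintype.card_fin, sum_const, card_univ, nsmul_eq_mul]
    field_simp
  simp_rw [hmean, div_pow, ← expect_div, expect_sq_sum_eq_mul_expect_sq _ hcentred]
  field_simp

theorem expect_sub_expect_sq (f : X → K) :
    𝔼 u, (f u - 𝔼 v, f v) ^ 2 = 𝔼 u, f u ^ 2 - (𝔼 u, f u) ^ 2 := by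
  set μ := 𝔼 v, f v with hμ
  simp only [sub_sq, expect_sub_distrib, expect_add_distrib, Fintype.expect_const, ← expect_mul,
    ← mul_expect]
  rw [← hμ]
  ring

theorem expect_sq_frequency_sub_density (p : X → Prop) [DecidablePred p] {N : ℕ} (hN : N ≠ 0) :
    𝔼 z : Fin N → X, ((N : K)⁻¹ * ∑ j, (if p (z j) then 1 else 0)
        - (Fintype.card X : K)⁻¹ * #{u | p u}) ^ 2
      = (#{u | p u} * #{u | ¬ p u} : K) / (Fintype.card X ^ 2 * N) := by
  have hfreq (z : Fin N → X) : (N : K)⁻¹ * ∑ j, (if p (z j) then 1 else 0)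
      = 𝔼 j, if p (z j) then (1 : K) else 0 := by
    rw [Fintype.expect_eq_sum_div_card, Fintype.card_fin, inv_mul_eq_div]
  have hdensity : (Fintype.card X : K)⁻¹ * #{u | p u} = 𝔼 u, if p u then (1 : K) else 0 := by
    rw [Fintype.expect_eq_sum_div_card, sum_boole, inv_mul_eq_div]
  have hcompl : (#{u | ¬ p u} : K) = Fintype.card X - #{u | p u} := by
    rw [← card_univ, ← card_filter_add_card_filter_not (s := univ) p]
    push_cast
    ring
  simp_rw [hdensity, hfreq]
  rw [expect_sq_expect_sub_expect (fun u => if p u then (1 : K) else 0) hN, expect_sub_expect_sq]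
  simp_rw [ite_pow, one_pow, zero_pow two_ne_zero, ← hdensity, hcompl]
  field_simp

end Variance

/-- The expected quadratic discrepancy of `N` independent uniformly random points of `{0,1}^n`
(equivalently, the average of `D^{L2}` over all `N`-tuples) equals
`(n/(N·2^{n+1}))·C(2n,n)`. -/
theorem expected_discrepancy_random_code (n N : ℕ) (hN : 1 ≤ N) :
    (Fintype.card (Fin N → (Fin n → Bool)) : ℝ)⁻¹ *
        ∑ z : Fin N → (Fin n → Bool), discTuple n N z
      = (n : ℝ) / (N * 2 ^ (n + 1)) * Nat.choose (2 * n) n := by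
  have hcard : (Fintype.card (Fin n → Bool) : ℝ) = 2 ^ n := by simp
  have hcomb (x : Fin n → Bool) : ∑ t ∈ range (n + 1),
      (#{u | hammingDist x u ≤ t} * #{u | t < hammingDist x u} : ℝ) = n * (2 * n).choose n / 2 := by
    have h := two_mul_sum_card_hammingDist_le_mul_card_lt x
    rw [Fintype.card_fin] at h
    rw [eq_div_iff two_ne_zero, mul_comm]
    exact_mod_cast h
  rw [inv_mul_eq_div, ← Fintype.expect_eq_sum_div_card]
  simp only [discTuple, expect_sum_comm]
  rw [← hcard]
  refine (sum_congr rfl fun t _ => sum_congr rfl fun x _ =>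
    expect_sq_frequency_sub_density (fun u => hammingDist x u ≤ t) (by omega)).trans ?_
  rw [sum_comm]
  simp_rw [not_le, ← sum_div, hcomb, sum_const, card_univ, nsmul_eq_mul, hcard]
  field_simp
  ring
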